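/- arXiv:1504.07257 — 4 statements merged into one kernel-verified Lean document; each statement's English description precedes it below -/
import Mathlib

section
/- Let R be a ring. The following statements are equivalent: (1) C_R is a left Ore set of R and Q_{l,cl}(R) := C_R⁻¹R is a semisimple Artinian ring; (2) R is a semiprime ring, udim(_R R) < ∞, 'C_R = C_R, and 'C_U ≠ ∅ for all uniform left ideals U of R. -/
/-!
Extension `N ↦ Q·f(N)` and contraction `L ↦ f⁻¹(L)` along `f : R → Q = C_R⁻¹R` match the left
ideals of `Q` with those of `R` up to essential extension. So `Q` is semisimple exactly when every
essential left ideal of `R` contains a regular element, and a uniform left ideal `U` of `R`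
extends to a simple left ideal of `Q`. Then for `u ∈ U` the left ideal `{x ∈ U | x u = 0}` is `0`
or `U`; if it were `U` for every `u`, then `U U = 0`, which semiprimeness forbids.

Conversely, uniform dimension `n` bounds the length of independent sequences of left ideals
(exchange the terms one by one against a uniform decomposition). Inside an essential left ideal
pick uniform `V_j` and `u_j ∈ 'C_{V_j}` with `V_k u_j = 0` for `j < k`; such a chain is
independent, so it must stop, and it stops only when `∑ u_j` is left regular. Applied to
`{c | c r ∈ R s}`, which is essential because `R s ≅ R`, this gives the Ore condition, and applied
to contractions of essential left ideals of `Q` it gives semisimplicity.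
-/

universe u

namespace Bavula

/-- The set of left regular elements of `R`. -/
def lReg (R : Type u) [Ring R] : Set R := {c : R | ∀ x : R, x * c = 0 → x = 0}

/-- The set of right regular elements of `R`. -/
def rReg (R : Type u) [Ring R] : Set R := {c : R | ∀ x : R, c * x = 0 → x = 0}

/-- The set of regular elements of `R`. -/
def reg (R : Type u) [Ring R] : Set R := lReg R ∩ rReg R

/-- `S` is a multiplicative set of `R`. -/
def IsMulSet {R : Type u} [Ring R] (S : Set R) : Prop :=
  (1 : R) ∈ S ∧ (∀ a ∈ S, ∀ b ∈ S, a * b ∈ S) ∧ (0 : R) ∉ S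

/-- `S` is a left Ore set of `R`. -/
def IsLeftOre {R : Type u} [Ring R] (S : Set R) : Prop :=
  IsMulSet S ∧ ∀ s ∈ S, ∀ r : R, ∃ s' ∈ S, ∃ r' : R, s' * r = r' * s

/-- `S` is a left denominator set of `R`. -/
def IsLeftDenom {R : Type u} [Ring R] (S : Set R) : Prop :=
  IsLeftOre S ∧ ∀ r : R, ∀ s ∈ S, r * s = 0 → ∃ t ∈ S, t * r = 0

/-- `S` is a right Ore set of `R`. -/
def IsRightOre {R : Type u} [Ring R] (S : Set R) : Prop :=
  IsMulSet S ∧ ∀ s ∈ S, ∀ r : R, ∃ s' ∈ S, ∃ r' : R, r * s' = s * r'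

/-- `S` is a right denominator set of `R`. -/
def IsRightDenom {R : Type u} [Ring R] (S : Set R) : Prop :=
  IsRightOre S ∧ ∀ r : R, ∀ s ∈ S, s * r = 0 → ∃ t ∈ S, r * t = 0

/-- `ass_R(S) = {r ∈ R | s r = 0 for some s ∈ S}`. -/
def ass {R : Type u} [Ring R] (S : Set R) : Set R := {r : R | ∃ s ∈ S, s * r = 0}

/-- `{r ∈ R | r s = 0 for some s ∈ S}` (the right-sided analogue of `ass`). -/
def rass {R : Type u} [Ring R] (S : Set R) : Set R := {r : R | ∃ s ∈ S, r * s = 0}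

/-- `S` is a (left) dense subset of `T`. -/
def DenseIn {R : Type u} [Ring R] (S T : Set R) : Prop := ∀ t ∈ T, ∃ r : R, r * t ∈ S

/-- `f : R →+* Q` realizes `Q` as the left localization `S⁻¹R` of `R` at `S`:
elements of `S` become units, every element of `Q` is a left fraction `(f s)⁻¹ * (f r)`,
and the kernel of `f` is `ass S`. -/
def IsLeftLoc {R : Type u} [Ring R] (S : Set R) {Q : Type u} [Ring Q] (f : R →+* Q) : Prop :=
  (∀ s ∈ S, IsUnit (f s)) ∧
  (∀ q : Q, ∃ s ∈ S, ∃ r : R, f s * q = f r) ∧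
  (∀ r : R, f r = 0 ↔ r ∈ ass S)

/-- `π : R →+* Q` realizes `Q` as the quotient of `R` by the set `a`
(in particular, `a` is then a two-sided ideal of `R`). -/
def IsQuotBy {R : Type u} [Ring R] (a : Set R) {Q : Type u} [Ring Q] (π : R →+* Q) : Prop :=
  Function.Surjective π ∧ ∀ r : R, π r = 0 ↔ r ∈ a

/-- A semiprime ring (no nonzero nilpotent ideals), elementwise: `x R x = 0 → x = 0`. -/
def SemiprimeRing (A : Type u) [Ring A] : Prop := ∀ x : A, (∀ r : A, x * r * x = 0) → x = 0

/-- `a` is a two-sided ideal of `R`, given as a set. -/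
def IsIdealSet {R : Type u} [Ring R] (a : Set R) : Prop :=
  (0 : R) ∈ a ∧ (∀ x ∈ a, ∀ y ∈ a, x + y ∈ a) ∧ ∀ r : R, ∀ x ∈ a, r * x ∈ a ∧ x * r ∈ a

/-- `a` is a semiprime (two-sided) ideal of `R`, i.e. `R/a` is a semiprime ring. -/
def IsSemiprimeIdealSet {R : Type u} [Ring R] (a : Set R) : Prop :=
  IsIdealSet a ∧ ∀ x : R, (∀ r : R, x * r * x ∈ a) → x ∈ a

/-- `a` is a prime (two-sided) ideal of `R`, i.e. `R/a` is a prime ring. -/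
def IsPrimeIdealSet {R : Type u} [Ring R] (a : Set R) : Prop :=
  IsIdealSet a ∧ a ≠ Set.univ ∧ ∀ x y : R, (∀ r : R, x * r * y ∈ a) → x ∈ a ∨ y ∈ a

/-- The prime radical of `A`: the intersection of all prime ideals of `A`. -/
def primeRadical (A : Type u) [Ring A] : Set A :=
  {x : A | ∀ p : Set A, IsPrimeIdealSet p → x ∈ p}

/-- The set of prime ideals of `R` minimal over `a`. -/
def minPrimesOver {R : Type u} [Ring R] (a : Set R) : Set (Set R) :=
  {p : Set R | IsPrimeIdealSet p ∧ a ⊆ p ∧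
    ∀ q : Set R, IsPrimeIdealSet q → a ⊆ q → q ⊆ p → q = p}

/-- A simple ring: nontrivial, with no two-sided ideals other than `0` and `A`. -/
def SimpleRing (A : Type u) [Ring A] : Prop :=
  (0 : A) ≠ 1 ∧ ∀ a : Set A, IsIdealSet a → a = {0} ∨ a = Set.univ

/-- A simple (left) Artinian ring. -/
def SimpleArtinianRing (A : Type u) [Ring A] : Prop := SimpleRing A ∧ IsArtinianRing A

/-- `I` is an essential left ideal of `R`. -/
def EssIdeal {R : Type u} [Ring R] (I : Submodule R R) : Prop :=
  ∀ J : Submodule R R, J ≠ ⊥ → I ⊓ J ≠ ⊥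

/-- `N` is an essential submodule of the left ideal `M`. -/
def EssIn {R : Type u} [Ring R] (N M : Submodule R R) : Prop :=
  N ≤ M ∧ ∀ W : Submodule R R, W ≤ M → W ≠ ⊥ → N ⊓ W ≠ ⊥

/-- `U` is a uniform left ideal of `R`. -/
def UniformIdeal {R : Type u} [Ring R] (U : Submodule R R) : Prop :=
  U ≠ ⊥ ∧ ∀ V W : Submodule R R, V ≤ U → W ≤ U → V ≠ ⊥ → W ≠ ⊥ → V ⊓ W ≠ ⊥

/-- `udim(_A A) < ∞`: there is a finite direct sum of uniform left ideals of `A`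
which is an essential left ideal of `A`. -/
def FinUdim (A : Type u) [Ring A] : Prop :=
  ∃ (n : ℕ) (U : Fin (n + 1) → Submodule A A),
    (∀ i, UniformIdeal (U i)) ∧
    (∀ i, U i ⊓ (⨆ j, ⨆ (_ : j ≠ i), U j) = ⊥) ∧
    EssIdeal (⨆ i, U i)

/-- `'C_V = {v ∈ V | right multiplication by v is injective on V}` for a left ideal `V`. -/
def lRegIn {R : Type u} [Ring R] (V : Submodule R R) : Set R :=
  {v : R | v ∈ V ∧ ∀ x ∈ V, x * v = 0 → x = 0}

/-- The family `P` of subsets of `R` satisfies the ascending chain condition. -/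
def AccOnSets {R : Type u} [Ring R] (P : Set (Set R)) : Prop :=
  ∀ f : ℕ → Set R, (∀ n, f n ∈ P) → (∀ n, f n ⊆ f (n + 1)) →
    ∃ N : ℕ, ∀ n : ℕ, N ≤ n → f n = f N

/-- The left annihilator of `X` in `R`. -/
def lAnn {R : Type u} [Ring R] (X : Set R) : Set R := {r : R | ∀ x ∈ X, r * x = 0}

/-- The right annihilator of `X` in `R`. -/
def rAnn {R : Type u} [Ring R] (X : Set R) : Set R := {r : R | ∀ x ∈ X, x * r = 0}

/-- A left Goldie ring: a.c.c. on left annihilators and finite left uniform dimension. -/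
def LeftGoldie (A : Type u) [Ring A] : Prop :=
  AccOnSets {B : Set A | ∃ X : Set A, B = lAnn X} ∧ FinUdim A

/-- The set of maximal left denominator sets of `A`. -/
def maxLeftDenom (A : Type u) [Ring A] : Set (Set A) :=
  {S : Set A | IsLeftDenom S ∧ ∀ T : Set A, IsLeftDenom T → S ⊆ T → S = T}

/-- `S_p = {c ∈ R | c + p ∈ C_{R/p}}`: the elements regular modulo `p`. -/
def regMod {R : Type u} [Ring R] (p : Set R) : Set R :=
  {c : R | (∀ x : R, x * c ∈ p → x ∈ p) ∧ ∀ x : R, c * x ∈ p → x ∈ p}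

/-- `I` is a right ideal of `R`, given as a set. -/
def IsRightIdealSet {R : Type u} [Ring R] (I : Set R) : Prop :=
  (0 : R) ∈ I ∧ (∀ x ∈ I, ∀ y ∈ I, x + y ∈ I) ∧ ∀ x ∈ I, ∀ r : R, x * r ∈ I

/-- The left singular ideal `ζ_l(R, a)` of `R` over `a`. -/
def leftSingularOver {R : Type u} [Ring R] (a : Set R) : Set R :=
  {r : R | ∃ I : Submodule R R, EssIdeal I ∧ a ⊆ I ∧ ∀ x ∈ I, x * r = 0}

section Lattice

variable {α : Type*} [CompleteLattice α]

def IsEssentialIn (a b : α) : Prop :=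
  a ≤ b ∧ ∀ ⦃x⦄, x ≤ b → Disjoint a x → x = ⊥

def IsUniform (u : α) : Prop :=
  u ≠ ⊥ ∧ ∀ ⦃x y : α⦄, x ≤ u → y ≤ u → x ≠ ⊥ → y ≠ ⊥ → x ⊓ y ≠ ⊥

/-- Uniform dimension at most `n`, stated for sequences in which each term is disjoint from the
join of the later ones; in a modular lattice these are exactly the independent sequences. -/
def UDimLE (α : Type*) [CompleteLattice α] (n : ℕ) : Prop :=
  ∀ v : ℕ → α, (∀ j, Disjoint (v j) (⨆ k > j, v k)) → ∀ m, (∀ j < m, v j ≠ ⊥) → m ≤ n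

variable {a b c : α}

theorem IsEssentialIn.trans (hab : IsEssentialIn a b) (hbc : IsEssentialIn b c) :
    IsEssentialIn a c :=
  ⟨hab.1.trans hbc.1, fun _ hx hax => hbc.2 hx <| disjoint_iff.mpr <| by
    rw [inf_comm]; exact hab.2 inf_le_right (hax.mono_right inf_le_left)⟩

theorem IsEssentialIn.of_le (hac : IsEssentialIn a c) (hab : a ≤ b) (hbc : b ≤ c) :
    IsEssentialIn b c :=
  ⟨hbc, fun _ hx hbx => hac.2 hx (hbx.mono_left hab)⟩

theorem IsUniform.isEssentialIn (hu : IsUniform c) (hac : a ≤ c) (ha : a ≠ ⊥) :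
    IsEssentialIn a c :=
  ⟨hac, fun _ hx hax => by_contra fun hx0 => hu.2 hac hx ha hx0 (disjoint_iff.mp hax)⟩

theorem UDimLE.exists_eq_bot {n : ℕ} (h : UDimLE α n) {v : ℕ → α}
    (hv : ∀ j, Disjoint (v j) (⨆ k > j, v k)) : ∃ j, v j = ⊥ := by
  by_contra! hne
  have := h v hv (n + 1) fun j _ => hne j
  omega

theorem UDimLE.exists_isUniform_le {n : ℕ} (h : UDimLE α n) {x : α} (hx : x ≠ ⊥) :
    ∃ y ≤ x, IsUniform y := by
  by_contra! hx'
  have split : ∀ y : {y : α // y ≤ x ∧ y ≠ ⊥}, ∃ a b : {y : α // y ≤ x ∧ y ≠ ⊥},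
      a.1 ≤ y.1 ∧ b.1 ≤ y.1 ∧ Disjoint a.1 b.1 := by
    rintro ⟨y, hyx, hy⟩
    have : ¬ IsUniform y := hx' y hyx
    simp only [IsUniform, hy, ne_eq, not_false_eq_true, true_and, not_forall, not_not] at this
    obtain ⟨a, b, ha, hb, ha0, hb0, hab⟩ := this
    exact ⟨⟨a, ha.trans hyx, ha0⟩, ⟨b, hb.trans hyx, hb0⟩, ha, hb, disjoint_iff.mpr hab⟩
  choose a b hay hby hab using split
  let rest : ℕ → {y : α // y ≤ x ∧ y ≠ ⊥} := fun k => Nat.rec ⟨x, le_rfl, hx⟩ (fun _ y => b y) k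
  have hrest : Antitone fun k => (rest k).1 := antitone_nat_of_succ_le fun k => hby (rest k)
  obtain ⟨j, hj⟩ := h.exists_eq_bot (v := fun k => (a (rest k)).1) fun j =>
    (hab (rest j)).mono_right <| iSup₂_le fun k hk => (hay (rest k)).trans (hrest hk)
  exact (a (rest j)).2.2 hj

section Modular

variable [IsModularLattice α]

theorem IsEssentialIn.sup_right (hab : IsEssentialIn a b) (hbc : Disjoint b c) :
    IsEssentialIn (a ⊔ c) (b ⊔ c) := by
  refine ⟨sup_le_sup_right hab.1 c, fun x hx hdis => ?_⟩
  have hax : Disjoint a (c ⊔ x) :=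
    (hbc.mono_left hab.1).disjoint_sup_right_of_disjoint_sup_left hdis
  have hbx : b ⊓ (x ⊔ c) = ⊥ :=
    hab.2 inf_le_left (hax.mono_right (by rw [sup_comm]; exact inf_le_right))
  have hxc : x ⊔ c = c := by
    rw [← inf_eq_right.mpr (sup_le hx le_sup_right), sup_comm b, sup_inf_assoc_of_le _ le_sup_right,
      hbx, sup_bot_eq]
  exact (hdis.mono_left le_sup_right).eq_bot_of_ge (le_sup_left.trans hxc.le)

theorem IsEssentialIn.sup {a' b' : α} (h : IsEssentialIn a b) (h' : IsEssentialIn a' b')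
    (hbb' : Disjoint b b') : IsEssentialIn (a ⊔ a') (b ⊔ b') := by
  have h₁ : IsEssentialIn (a ⊔ a') (a ⊔ b') := by
    simpa only [sup_comm a] using h'.sup_right (hbb'.mono_left h.1).symm
  exact h₁.trans (h.sup_right hbb')

theorem isEssentialIn_biSup {ι : Type*} {a b : ι → α} (hb : iSupIndep b) (s : Finset ι)
    (hab : ∀ i ∈ s, IsEssentialIn (a i) (b i)) :
    IsEssentialIn (⨆ i ∈ s, a i) (⨆ i ∈ s, b i) := by
  classical
  induction s using Finset.induction_on with
  | empty => simpa using ⟨le_rfl, fun _ hx _ => le_bot_iff.mp hx⟩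
  | insert i s hi ih =>
    rw [Finset.iSup_insert, Finset.iSup_insert]
    exact (hab i (s.mem_insert_self i)).sup (ih fun j hj => hab j (Finset.mem_insert_of_mem hj))
      (hb.disjoint_biSup hi)

theorem isEssentialIn_top_of_forall_inf_ne_bot {ι : Type*} [Fintype ι] {u : ι → α}
    (hu : ∀ i, IsUniform (u i)) (hind : iSupIndep u) (hess : IsEssentialIn (⨆ i, u i) ⊤)
    {x : α} (hx : ∀ i, x ⊓ u i ≠ ⊥) : IsEssentialIn x ⊤ := by
  have := isEssentialIn_biSup hind Finset.univ fun i _ => (hu i).isEssentialIn inf_le_right (hx i)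
  simp only [Finset.mem_univ, iSup_true] at this
  exact (this.trans hess).of_le (iSup_le fun i => inf_le_left) le_top

theorem udimLE_card {ι : Type*} [Fintype ι] {u : ι → α} (hu : ∀ i, IsUniform (u i))
    (hind : iSupIndep u) (hess : IsEssentialIn (⨆ i, u i) ⊤) : UDimLE α (Fintype.card ι) := by
  classical
  intro v hv m hne
  -- exchange lemma: the first `k` terms of `v` can be traded for `k` of the `u i`
  suffices ∀ k ≤ m, ∃ T : Finset ι, T.card = k ∧ Disjoint (⨆ i ∈ T, u i) (⨆ j ≥ k, v j) by
    obtain ⟨T, hT, -⟩ := this m le_rfl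
    exact hT ▸ T.card_le_univ
  intro k
  induction k with
  | zero => exact fun _ => ⟨∅, rfl, by simp⟩
  | succ k ih =>
    intro hk
    obtain ⟨T, hT, hdis⟩ := ih (by omega)
    rw [biSup_ge_eq_sup] at hdis
    have hvk : Disjoint (v k) ((⨆ j > k, v j) ⊔ ⨆ i ∈ T, u i) :=
      (hv k).disjoint_sup_right_of_disjoint_sup_left hdis.symm
    obtain ⟨i, hi⟩ : ∃ i, ((⨆ j > k, v j) ⊔ ⨆ i ∈ T, u i) ⊓ u i = ⊥ := by
      by_contra! h
      exact hne k (by omega) <|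
        (isEssentialIn_top_of_forall_inf_ne_bot hu hind hess h).2 le_top hvk.symm
    have hiT : i ∉ T := fun hiT => (hu i).1 <| by
      rw [← hi, eq_comm, inf_eq_right]
      exact le_sup_of_le_right (le_biSup u hiT)
    refine ⟨insert i T, by rw [Finset.card_insert_of_notMem hiT, hT], ?_⟩
    rw [Finset.iSup_insert, sup_comm]
    exact ((hdis.mono_right le_sup_right).symm.disjoint_sup_right_of_disjoint_sup_left
      (disjoint_iff.mpr hi)).symm

theorem IsEssentialIn.eq [ComplementedLattice α] (h : IsEssentialIn a b) : a = b := by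
  obtain ⟨c, hc⟩ := exists_isCompl a
  have hcb : c ⊓ b = ⊥ := h.2 inf_le_right (hc.disjoint.mono_right inf_le_left)
  rw [← top_inf_eq b, ← hc.sup_eq_top, sup_inf_assoc_of_le _ h.1, hcb, sup_bot_eq]

theorem exists_disjoint_isEssentialIn_sup [IsCompactlyGenerated α] (a : α) :
    ∃ c, Disjoint a c ∧ IsEssentialIn (a ⊔ c) ⊤ := by
  obtain ⟨c, -, hc⟩ := zorn_le_nonempty₀ {c | Disjoint a c}
    (fun s hs hchain _ _ => ⟨sSup s, (hchain.directedOn.disjoint_sSup_right).mpr hs,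
      fun _ hz => le_sSup hz⟩) ⊥ disjoint_bot_right
  refine ⟨c, hc.prop, le_top, fun x _ hx => ?_⟩
  have hcx : Disjoint a (c ⊔ x) := hc.prop.disjoint_sup_right_of_disjoint_sup_left hx
  exact (hx.mono_left le_sup_right).eq_bot_of_ge
    ((le_sup_right : x ≤ c ⊔ x).trans (hc.2 hcx le_sup_left))

end Modular

end Lattice

section Goldie

variable {R : Type u} [Ring R]

open scoped nonZeroDivisors

theorem mem_reg_iff {c : R} : c ∈ reg R ↔ c ∈ R⁰ := and_comm

theorem mem_ker_toSpanSingleton {x u : R} :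
    x ∈ LinearMap.ker (LinearMap.toSpanSingleton R R u) ↔ x * u = 0 := by
  rw [LinearMap.mem_ker, LinearMap.toSpanSingleton_apply, smul_eq_mul]

theorem mem_lRegIn_iff {V : Submodule R R} {u : R} :
    u ∈ lRegIn V ↔ u ∈ V ∧ Disjoint V (LinearMap.ker (LinearMap.toSpanSingleton R R u)) := by
  simp only [lRegIn, Set.mem_ofPred_eq, Submodule.disjoint_def, mem_ker_toSpanSingleton]

theorem essIdeal_iff {I : Submodule R R} : EssIdeal I ↔ IsEssentialIn I ⊤ := by
  simp only [EssIdeal, IsEssentialIn, le_top, true_and, forall_const, disjoint_iff]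
  exact forall_congr' fun _ => not_imp_not

theorem IsEssentialIn.comap {M N : Type*} [AddCommGroup M] [Module R M] [AddCommGroup N]
    [Module R N] {L : Submodule R N} (hL : IsEssentialIn L ⊤) (φ : M →ₗ[R] N) :
    IsEssentialIn (L.comap φ) ⊤ := by
  refine ⟨le_top, fun X _ hX => eq_bot_iff.mpr fun x hx => ?_⟩
  have hφX : X.map φ = ⊥ := hL.2 le_top <| Submodule.disjoint_def.mpr <| by
    rintro _ hL' ⟨y, hy, rfl⟩
    exact Submodule.disjoint_def.mp hX y hL' hy ▸ map_zero φ
  have hφx : φ x = 0 := (Submodule.mem_bot R).mp (hφX ▸ Submodule.mem_map_of_mem hx)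
  exact Submodule.disjoint_def.mp hX x (by simp [hφx]) hx ▸ Submodule.zero_mem _

theorem FinUdim.nontrivial (h : FinUdim R) : Nontrivial R := by
  obtain ⟨_, U, hU, -⟩ := h
  obtain ⟨x, -, hx⟩ := Submodule.ne_bot_iff _ |>.mp (hU 0).1
  exact nontrivial_of_ne x 0 hx

theorem FinUdim.exists_udimLE (h : FinUdim R) : ∃ n, UDimLE (Submodule R R) n := by
  obtain ⟨n, U, hU, hind, hess⟩ := h
  exact ⟨_, udimLE_card hU (iSupIndep_def.mpr fun i => disjoint_iff.mpr (hind i))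
    (essIdeal_iff.mp hess)⟩

theorem finUdim_of_iSupIndep [Nontrivial R] {ι : Type*} [Fintype ι] {U : ι → Submodule R R}
    (hU : ∀ i, IsUniform (U i)) (hind : iSupIndep U) (hess : IsEssentialIn (⨆ i, U i) ⊤) :
    FinUdim R := by
  obtain ⟨n, hn⟩ : ∃ n, Fintype.card ι = n + 1 := by
    refine Nat.exists_eq_succ_of_ne_zero fun h0 => ?_
    have : IsEmpty ι := Fintype.card_eq_zero_iff.mp h0
    have htop : (⊤ : Submodule R R) = ⊥ := hess.2 le_top (by simp)
    exact top_ne_bot htop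
  let e := (Fintype.equivFinOfCardEq hn).symm
  refine ⟨n, U ∘ e, fun i => hU (e i), fun i => disjoint_iff.mp ?_, ?_⟩
  · exact iSupIndep_def.mp (hind.comp e.injective) i
  · rw [essIdeal_iff, Function.comp_def, e.iSup_comp]
    exact hess

theorem isEssentialIn_span_singleton {n : ℕ} (h : UDimLE (Submodule R R) n) {c : R}
    (hc : c ∈ lReg R) : IsEssentialIn (Submodule.span R {c}) ⊤ := by
  refine ⟨le_top, fun X _ hX => ?_⟩
  have hcpow (k : ℕ) : c ^ k ∈ lReg R := pow_mem (S := nonZeroDivisorsRight R) hc k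
  -- if `X ∩ Rc = 0`, the left ideals `X c ^ k` form an independent sequence
  let v (k : ℕ) := X.map (LinearMap.toSpanSingleton R R (c ^ k))
  have hv (j : ℕ) : Disjoint (v j) (⨆ k > j, v k) := by
    have hle : ⨆ k > j, v k ≤ Submodule.span R {c ^ (j + 1)} := iSup₂_le fun k hk => by
      rintro _ ⟨x, -, rfl⟩
      refine Submodule.mem_span_singleton.mpr ⟨x * c ^ (k - (j + 1)), ?_⟩
      rw [LinearMap.toSpanSingleton_apply, smul_eq_mul, smul_eq_mul, mul_assoc, ← pow_add,
        Nat.sub_add_cancel hk]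
    refine Disjoint.mono_right hle (Submodule.disjoint_def.mpr ?_)
    rintro _ ⟨x, hx, rfl⟩ hy
    obtain ⟨r, hr⟩ := Submodule.mem_span_singleton.mp hy
    simp only [LinearMap.toSpanSingleton_apply, smul_eq_mul] at hr ⊢
    have hxr : x = r * c := by
      refine (sub_eq_zero.mp (hcpow j _ ?_)).symm
      rw [sub_mul, mul_assoc, ← pow_succ', hr, sub_self]
    have hx0 : x = 0 :=
      Submodule.disjoint_def.mp hX x (hxr ▸ Submodule.mem_span_singleton.mpr ⟨r, rfl⟩) hx
    rw [hx0, zero_mul]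
  obtain ⟨k, hk⟩ := h.exists_eq_bot hv
  refine eq_bot_iff.mpr fun x hx => (Submodule.mem_bot R).mpr (hcpow k x ?_)
  have := Submodule.mem_map_of_mem (f := LinearMap.toSpanSingleton R R (c ^ k)) hx
  rwa [show X.map _ = ⊥ from hk, Submodule.mem_bot, LinearMap.toSpanSingleton_apply,
    smul_eq_mul] at this

structure IsLRegChain (E : Submodule R R) (m : ℕ) (V : ℕ → Submodule R R) (u : ℕ → R) :
    Prop where
  le : ∀ j, V j ≤ E
  ne_bot : ∀ j < m, V j ≠ ⊥
  eq_bot : ∀ j ≥ m, V j = ⊥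
  mem_lRegIn : ∀ j, u j ∈ lRegIn (V j)
  le_ker : ∀ j k, j < k → V k ≤ LinearMap.ker (LinearMap.toSpanSingleton R R (u j))

namespace IsLRegChain

variable {E : Submodule R R} {m : ℕ} {V : ℕ → Submodule R R} {u : ℕ → R}

theorem disjoint (hc : IsLRegChain E m V u) (j : ℕ) : Disjoint (V j) (⨆ k > j, V k) :=
  (mem_lRegIn_iff.mp (hc.mem_lRegIn j)).2.mono_right (iSup₂_le fun k hk => hc.le_ker j k hk)

theorem sum_mem_lReg (hc : IsLRegChain E m V u)
    (hann : ∀ x : R, (∀ j < m, x * u j = 0) → x = 0) : ∑ j ∈ Finset.range m, u j ∈ lReg R := by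
  intro x hx
  refine hann x fun k => Nat.strong_induction_on k fun k ih hk => ?_
  refine (hc.mem_lRegIn k).2 _ ((V k).smul_mem x (hc.mem_lRegIn k).1) ?_
  have hsum : ∑ j ∈ Finset.range m, x * u j * u k = 0 := by
    rw [← Finset.sum_mul, ← Finset.mul_sum, hx, zero_mul]
  rwa [Finset.sum_eq_single k (fun j hj hjk => ?_)
    (fun hk' => absurd (Finset.mem_range.mpr hk) hk')] at hsum
  rcases lt_or_gt_of_ne hjk with hjk | hkj
  · rw [ih j hjk (Finset.mem_range.mp hj), zero_mul]
  · rw [mul_assoc, mem_ker_toSpanSingleton.mp (hc.le_ker k j hkj (hc.mem_lRegIn j).1), mul_zero]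

theorem extend (hc : IsLRegChain E m V u) (hE : IsEssentialIn E ⊤) {n : ℕ}
    (h : UDimLE (Submodule R R) n) (hC : ∀ U : Submodule R R, IsUniform U → (lRegIn U).Nonempty)
    (hann : ∃ x : R, (∀ j < m, x * u j = 0) ∧ x ≠ 0) :
    ∃ V' u', IsLRegChain E (m + 1) V' u' := by
  obtain ⟨x, hx, hx0⟩ := hann
  let A := ⨅ j ∈ Finset.range m, LinearMap.ker (LinearMap.toSpanSingleton R R (u j))
  have hEA : E ⊓ A ≠ ⊥ := by
    refine fun hEA => hx0 ((Submodule.mem_bot R).mp ?_)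
    rw [← hE.2 le_top (disjoint_iff.mpr hEA)]
    simpa [A, mem_ker_toSpanSingleton] using hx
  obtain ⟨Y, hY, hYu⟩ := h.exists_isUniform_le hEA
  obtain ⟨y, hy⟩ := hC Y hYu
  refine ⟨Function.update V m Y, Function.update u m y, ⟨fun j => ?_, fun j hj => ?_,
    fun j hj => ?_, fun j => ?_, fun j k hjk => ?_⟩⟩
  · rw [Function.update_apply]
    split_ifs
    exacts [hY.trans inf_le_left, hc.le j]
  · rw [Function.update_apply]
    split_ifs
    exacts [hYu.1, hc.ne_bot j (by omega)]
  · rw [Function.update_of_ne (by omega)]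
    exact hc.eq_bot j (by omega)
  · simp only [Function.update_apply]
    split_ifs
    exacts [hy, hc.mem_lRegIn j]
  · simp only [Function.update_apply]
    split_ifs with hk hj hj
    · omega
    · exact hY.trans (inf_le_right.trans (iInf₂_le j (Finset.mem_range.mpr (by omega))))
    · exact (hc.eq_bot k (by omega)).trans_le bot_le
    · exact hc.le_ker j k hjk

end IsLRegChain

theorem exists_mem_lReg_of_isEssentialIn {n : ℕ} (h : UDimLE (Submodule R R) n)
    (hC : ∀ U : Submodule R R, IsUniform U → (lRegIn U).Nonempty) {E : Submodule R R}
    (hE : IsEssentialIn E ⊤) : ∃ c ∈ E, c ∈ lReg R := by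
  by_contra! hE'
  have chain (m : ℕ) : ∃ V u, IsLRegChain E m V u := by
    induction m with
    | zero => exact ⟨⊥, 0, fun _ => bot_le, fun _ h => absurd h (Nat.not_lt_zero _),
        fun _ _ => rfl, fun _ => ⟨zero_mem _, fun x hx _ => hx⟩, fun _ _ _ => bot_le⟩
    | succ m ih =>
      obtain ⟨V, u, hc⟩ := ih
      by_cases hann : ∀ x : R, (∀ j < m, x * u j = 0) → x = 0
      · exact absurd (hc.sum_mem_lReg hann)
          (hE' _ (Submodule.sum_mem _ fun j _ => hc.le j (hc.mem_lRegIn j).1))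
      · push Not at hann
        exact hc.extend hE h hC hann
  obtain ⟨V, u, hc⟩ := chain (n + 1)
  have := h V hc.disjoint (n + 1) hc.ne_bot
  omega

theorem isLeftOre_reg [Nontrivial R] {n : ℕ} (h : UDimLE (Submodule R R) n)
    (hC : ∀ U : Submodule R R, IsUniform U → (lRegIn U).Nonempty) (hlr : lReg R = reg R) :
    IsLeftOre (reg R) := by
  refine ⟨⟨?_, ?_, ?_⟩, fun s hs r => ?_⟩
  · exact mem_reg_iff.mpr (one_mem _)
  · exact fun a ha b hb => mem_reg_iff.mpr (mul_mem (mem_reg_iff.mp ha) (mem_reg_iff.mp hb))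
  · exact fun h0 => zero_notMem_nonZeroDivisors (mem_reg_iff.mp h0)
  have hE := (isEssentialIn_span_singleton h hs.1).comap (LinearMap.toSpanSingleton R R r)
  obtain ⟨c, hcE, hc⟩ := exists_mem_lReg_of_isEssentialIn h hC hE
  obtain ⟨r', hr'⟩ := Submodule.mem_span_singleton.mp hcE
  exact ⟨c, hlr ▸ hc, r', by simpa using hr'.symm⟩

theorem semiprimeRing_of_forall_isEssentialIn
    (h : ∀ E : Submodule R R, IsEssentialIn E ⊤ → ∃ c ∈ E, c ∈ lReg R) : SemiprimeRing R := by
  intro x hx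
  -- the right annihilator of the right ideal `x R` is an essential left ideal
  let E : Submodule R R :=
    { carrier := {r | ∀ u, x * u * r = 0}
      add_mem' := fun ha hb u => by rw [mul_add, ha u, hb u, add_zero]
      zero_mem' := fun u => mul_zero _
      smul_mem' := fun a r hr u => by rw [smul_eq_mul, ← mul_assoc, mul_assoc x, hr] }
  have hE : IsEssentialIn E ⊤ := by
    refine ⟨le_top, fun J _ hJ => eq_bot_iff.mpr fun y hy => ?_⟩
    by_cases hyE : ∀ u, x * u * y = 0
    · exact (Submodule.mem_bot R).mpr (Submodule.disjoint_def.mp hJ y hyE hy)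
    · push Not at hyE
      obtain ⟨u, hu⟩ := hyE
      refine absurd (Submodule.disjoint_def.mp hJ (x * u * y) (fun v => ?_) ?_) hu
      · simp only [← mul_assoc, hx v, zero_mul]
      · exact J.smul_mem (x * u) hy
  obtain ⟨c, hcE, hc⟩ := h E hE
  exact hc x (by simpa using hcE 1)

end Goldie

section Localization

variable {R Q : Type u} [Ring R] [Ring Q] {f : R →+* Q}

namespace IsLeftLoc

theorem isUnit (hf : IsLeftLoc (reg R) f) {s : R} (hs : s ∈ reg R) : IsUnit (f s) := hf.1 s hs

theorem exists_mul_eq (hf : IsLeftLoc (reg R) f) (q : Q) : ∃ s ∈ reg R, ∃ r, f s * q = f r :=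
  hf.2.1 q

theorem injective (hf : IsLeftLoc (reg R) f) : Function.Injective f :=
  (injective_iff_map_eq_zero f).mpr fun r hr => by
    obtain ⟨s, hs, hsr⟩ := (hf.2.2 r).mp hr
    exact hs.2 r hsr

theorem exists_mul_eq_of_mem_span (hOre : IsLeftOre (reg R)) (hf : IsLeftLoc (reg R) f)
    {N : Submodule R R} {q : Q} (hq : q ∈ Submodule.span Q (f '' N)) :
    ∃ s ∈ reg R, ∃ x ∈ N, f s * q = f x := by
  induction hq using Submodule.span_induction with
  | mem _ hq =>
    obtain ⟨x, hx, rfl⟩ := hq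
    exact ⟨1, hOre.1.1, x, hx, by simp⟩
  | zero => exact ⟨1, hOre.1.1, 0, N.zero_mem, by simp⟩
  | add q₁ q₂ _ _ h₁ h₂ =>
    obtain ⟨s₁, hs₁, x₁, hx₁, h₁⟩ := h₁
    obtain ⟨s₂, hs₂, x₂, hx₂, h₂⟩ := h₂
    obtain ⟨t, ht, a, hta⟩ := hOre.2 s₁ hs₁ s₂
    refine ⟨t * s₂, hOre.1.2.1 t ht s₂ hs₂, a * x₁ + t * x₂,
      N.add_mem (N.smul_mem a hx₁) (N.smul_mem t hx₂), ?_⟩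
    have e₁ : f (t * s₂) * q₁ = f (a * x₁) := by rw [hta, map_mul, mul_assoc, h₁, map_mul]
    have e₂ : f (t * s₂) * q₂ = f (t * x₂) := by rw [map_mul, mul_assoc, h₂, map_mul]
    rw [mul_add, e₁, e₂, map_add]
  | smul a q _ h =>
    obtain ⟨s, hs, x, hx, hsq⟩ := h
    obtain ⟨t, ht, r, htr⟩ := hf.exists_mul_eq a
    obtain ⟨w, hw, b, hwb⟩ := hOre.2 s hs r
    refine ⟨w * t, hOre.1.2.1 w hw t ht, b * x, N.smul_mem b hx, ?_⟩
    rw [smul_eq_mul, map_mul, mul_assoc, ← mul_assoc (f t), htr, ← mul_assoc, ← map_mul, hwb,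
      map_mul, mul_assoc, hsq, map_mul]

theorem isEssentialIn_comap_span (hOre : IsLeftOre (reg R)) (hf : IsLeftLoc (reg R) f)
    (N : Submodule R R) :
    IsEssentialIn N ((Submodule.span Q (f '' N)).comap f.toSemilinearMap) := by
  refine ⟨fun x hx => Submodule.subset_span ⟨x, hx, rfl⟩, fun X hX hNX => ?_⟩
  refine eq_bot_iff.mpr fun x hx => ?_
  obtain ⟨s, hs, y, hy, hsy⟩ := hf.exists_mul_eq_of_mem_span hOre (hX hx)
  have hsx : s * x = y := hf.injective (by rw [map_mul, ← hsy]; rfl)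
  have := Submodule.disjoint_def.mp hNX (s * x) (hsx ▸ hy) (X.smul_mem s hx)
  exact (Submodule.mem_bot R).mpr (hs.2 x this)

theorem span_image_comap (hf : IsLeftLoc (reg R) f) (L : Submodule Q Q) :
    Submodule.span Q (f '' L.comap f.toSemilinearMap) = L := by
  refine le_antisymm (Submodule.span_le.mpr (by rintro _ ⟨x, hx, rfl⟩; exact hx)) fun q hq => ?_
  obtain ⟨s, hs, r, hsq⟩ := hf.exists_mul_eq q
  have hr : r ∈ L.comap f.toSemilinearMap := by
    simpa [← hsq] using L.smul_mem (f s) hq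
  obtain ⟨t, ht⟩ := hf.isUnit hs
  have hq' : q = (t⁻¹ : Qˣ) * f r := by rw [← hsq, ← ht, Units.inv_mul_cancel_left]
  rw [hq']
  exact Submodule.smul_mem _ _ (Submodule.subset_span ⟨r, hr, rfl⟩)

theorem eq_bot_of_comap_eq_bot (hf : IsLeftLoc (reg R) f) {L : Submodule Q Q}
    (hL : L.comap f.toSemilinearMap = ⊥) : L = ⊥ := by
  rw [← hf.span_image_comap L, hL]
  simp

theorem comap_bot (hf : IsLeftLoc (reg R) f) : (⊥ : Submodule Q Q).comap f.toSemilinearMap = ⊥ :=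
  LinearMap.ker_eq_bot.mpr hf.injective

theorem isEssentialIn_span (hOre : IsLeftOre (reg R)) (hf : IsLeftLoc (reg R) f)
    {N N' : Submodule R R} (h : IsEssentialIn N N') :
    IsEssentialIn (Submodule.span Q (f '' N)) (Submodule.span Q (f '' N')) := by
  refine ⟨Submodule.span_mono (Set.image_mono h.1), fun X hX hNX => hf.eq_bot_of_comap_eq_bot ?_⟩
  have hdis : Disjoint N (X.comap f.toSemilinearMap ⊓ N') := Submodule.disjoint_def.mpr
    fun z hzN hz => hf.injective <| (Submodule.disjoint_def.mp hNX (f z)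
      (Submodule.subset_span ⟨z, hzN, rfl⟩) hz.1).trans (map_zero f).symm
  refine (hf.isEssentialIn_comap_span hOre N').2 (Submodule.comap_mono hX) ?_
  rw [disjoint_iff, inf_comm]
  exact h.2 inf_le_right hdis

theorem isEssentialIn_comap (hOre : IsLeftOre (reg R)) (hf : IsLeftLoc (reg R) f)
    {L L' : Submodule Q Q} (h : IsEssentialIn L L') :
    IsEssentialIn (L.comap f.toSemilinearMap) (L'.comap f.toSemilinearMap) := by
  refine ⟨Submodule.comap_mono h.1, fun X hX hLX => ?_⟩
  have hdis : Disjoint L (Submodule.span Q (f '' X)) := by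
    refine Submodule.disjoint_def.mpr fun q hqL hq => ?_
    obtain ⟨s, hs, x, hx, hsq⟩ := hf.exists_mul_eq_of_mem_span hOre hq
    have hxL : x ∈ L.comap f.toSemilinearMap := by simpa [← hsq] using L.smul_mem (f s) hqL
    rw [Submodule.disjoint_def.mp hLX x hxL hx, map_zero] at hsq
    exact (hf.isUnit hs).mul_right_eq_zero.mp hsq
  have hXL' : Submodule.span Q (f '' X) ≤ L' :=
    Submodule.span_le.mpr (by rintro _ ⟨x, hx, rfl⟩; exact hX hx)
  have := (hf.isEssentialIn_comap_span hOre X).1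
  rwa [h.2 hXL' hdis, hf.comap_bot, le_bot_iff] at this

theorem iSupIndep_comap (hf : IsLeftLoc (reg R) f) {ι : Type*} {L : ι → Submodule Q Q}
    (h : iSupIndep L) : iSupIndep fun i => (L i).comap f.toSemilinearMap := by
  refine iSupIndep_def.mpr fun i => Submodule.disjoint_def.mpr fun x hxi hx => ?_
  refine hf.injective ((Submodule.disjoint_def.mp (iSupIndep_def.mp h i) (f x) hxi ?_).trans
    (map_zero f).symm)
  exact iSup₂_le (fun j hj => Submodule.comap_mono (le_iSup₂_of_le j hj le_rfl)
    (f := f.toSemilinearMap)) hx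

theorem isSemisimpleRing_iff (hOre : IsLeftOre (reg R)) (hf : IsLeftLoc (reg R) f) :
    IsSemisimpleRing Q ↔ ∀ E : Submodule R R, IsEssentialIn E ⊤ → ∃ c ∈ E, c ∈ reg R := by
  have htop : Submodule.span Q (f '' (⊤ : Submodule R R)) = ⊤ :=
    Ideal.eq_top_of_isUnit_mem _ (Submodule.subset_span ⟨1, trivial, map_one f⟩) isUnit_one
  constructor
  · intro _ E hE
    have hE' := (hf.isEssentialIn_span hOre hE).eq.trans htop
    obtain ⟨s, hs, x, hx, hsx⟩ :=
      hf.exists_mul_eq_of_mem_span hOre (hE' ▸ Submodule.mem_top : (1 : Q) ∈ _)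
    exact ⟨x, hx, (hf.injective (by rw [← hsx, mul_one]) : s = x) ▸ hs⟩
  · refine fun h => { exists_isCompl := fun I => ?_ }
    obtain ⟨C, hIC, hess⟩ := exists_disjoint_isEssentialIn_sup I
    have hess' := hf.isEssentialIn_comap hOre hess
    rw [Submodule.comap_top] at hess'
    obtain ⟨c, hc, hcreg⟩ := h _ hess'
    exact ⟨C, hIC, codisjoint_iff.mpr (Ideal.eq_top_of_isUnit_mem _ hc (hf.isUnit hcreg))⟩

theorem lReg_eq_reg [IsArtinianRing Q] (hf : IsLeftLoc (reg R) f) : lReg R = reg R := by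
  refine Set.Subset.antisymm (fun c hc => ⟨hc, fun z hz => ?_⟩) Set.inter_subset_left
  have hfc : IsUnit (f c) := IsArtinianRing.isUnit_iff_isRightRegular.mpr <|
    isRightRegular_iff_mem_nonZeroDivisorsRight.mpr fun q hq => by
      obtain ⟨s, hs, r, hsq⟩ := hf.exists_mul_eq q
      have hrc : r * c = 0 :=
        hf.injective (by rw [map_mul, ← hsq, mul_assoc, hq, mul_zero, map_zero])
      rw [hc r hrc, map_zero] at hsq
      exact (hf.isUnit hs).mul_right_eq_zero.mp hsq
  exact hf.injective <| (hfc.mul_right_eq_zero.mp (by rw [← map_mul, hz, map_zero])).trans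
    (map_zero f).symm

theorem lRegIn_nonempty [IsSemisimpleRing Q] (hOre : IsLeftOre (reg R))
    (hf : IsLeftLoc (reg R) f) (hsp : SemiprimeRing R) {U : Submodule R R} (hU : IsUniform U) :
    (lRegIn U).Nonempty := by
  by_contra hne
  -- `{x ∈ U | x u = 0}` is nonzero, hence essential in `U`, and both have the same extension
  have hUU : ∀ u ∈ U, ∀ x ∈ U, x * u = 0 := by
    intro u hu x hx
    let K := U ⊓ LinearMap.ker (LinearMap.toSpanSingleton R R u)
    have hK : K ≠ ⊥ := fun hK =>
      hne (Set.nonempty_of_mem ((mem_lRegIn_iff (u := u)).mpr ⟨hu, disjoint_iff.mpr hK⟩))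
    have hKU := (hf.isEssentialIn_span hOre (hU.isEssentialIn inf_le_left hK)).eq
    obtain ⟨s, hs, y, hy, hsy⟩ := hf.exists_mul_eq_of_mem_span (N := K) hOre
      (by rw [hKU]; exact Submodule.subset_span ⟨x, hx, rfl⟩)
    have hsx : s * x = y := hf.injective (by rw [map_mul, hsy])
    exact hs.2 _ (by rw [← mul_assoc, hsx]; exact mem_ker_toSpanSingleton.mp hy.2)
  obtain ⟨u, hu, hu0⟩ := Submodule.ne_bot_iff _ |>.mp hU.1
  exact hu0 (hsp u fun r => by rw [mul_assoc]; exact hUU _ (U.smul_mem r hu) u hu)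

theorem finUdim [IsSemisimpleRing Q] [Nontrivial R] (hOre : IsLeftOre (reg R))
    (hf : IsLeftLoc (reg R) f) : FinUdim R := by
  obtain ⟨s, hind, htop, hsimple⟩ := IsSemisimpleModule.exists_sSupIndep_sSup_simples_eq_top Q Q
  have : Fintype s := (WellFoundedGT.finite_of_sSupIndep hind).fintype
  have hspan_ne_bot {V : Submodule R R} (hV : V ≠ ⊥) : Submodule.span Q (f '' V) ≠ ⊥ :=
    fun h0 => hV <| le_bot_iff.mp <| hf.comap_bot ▸ h0 ▸ (hf.isEssentialIn_comap_span hOre V).1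
  let U (S : s) : Submodule R R := S.1.comap f.toSemilinearMap
  refine finUdim_of_iSupIndep (U := U) (fun S => ?_)
    (hf.iSupIndep_comap ((sSupIndep_iff s).mp hind)) ?_
  · have hS : IsAtom S.1 := isSimpleModule_iff_isAtom.mp (hsimple S S.2)
    refine ⟨fun h0 => hS.1 (hf.eq_bot_of_comap_eq_bot h0), fun V W hV hW hV0 hW0 hVW => hW0 ?_⟩
    have hVS : Submodule.span Q (f '' V) = S := (hS.le_iff_eq (hspan_ne_bot hV0)).mp <|
      (Submodule.span_mono (Set.image_mono hV)).trans (hf.span_image_comap S).le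
    exact (hf.isEssentialIn_comap_span hOre V).2 (hVS ▸ hW) (disjoint_iff.mpr hVW)
  · have hspan : Submodule.span Q (f '' (⨆ S, U S : Submodule R R)) = ⊤ := by
      refine eq_top_iff.mpr (htop ▸ sSup_le fun S hS => ?_)
      calc S = Submodule.span Q (f '' S.comap f.toSemilinearMap) := (hf.span_image_comap S).symm
        _ ≤ _ := Submodule.span_mono (Set.image_mono (le_iSup U ⟨S, hS⟩))
    have := hf.isEssentialIn_comap_span hOre (⨆ S, U S)
    rwa [hspan, Submodule.comap_top] at this

end IsLeftLoc

open scoped nonZeroDivisors in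
theorem exists_isLeftLoc (hOre : IsLeftOre (reg R)) :
    ∃ (Q : Type u) (_ : Ring Q) (f : R →+* Q), IsLeftLoc (reg R) f := by
  let _ : OreLocalization.OreSet R⁰ := (OreLocalization.nonempty_oreSet_iff.mpr
    ⟨fun r₁ r₂ s h => ⟨1, by rw [(mul_cancel_right_mem_nonZeroDivisors s.2).mp h]⟩,
      fun r s => by
        obtain ⟨s', hs', r', h⟩ := hOre.2 s (mem_reg_iff.mpr s.2) r
        exact ⟨r', ⟨s', mem_reg_iff.mp hs'⟩, h⟩⟩).some
  refine ⟨OreLocalization R⁰ R, inferInstance, OreLocalization.numeratorRingHom,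
    fun s hs => OreLocalization.numerator_isUnit ⟨s, mem_reg_iff.mp hs⟩, fun q => ?_, fun r => ?_⟩
  · induction q using OreLocalization.ind with
    | _ r s => exact ⟨s, mem_reg_iff.mpr s.2, r, by simp⟩
  · have hinj : Function.Injective
        (OreLocalization.numeratorRingHom : R →+* OreLocalization R⁰ R) :=
      OreLocalization.numeratorHom_inj inf_le_left
    rw [map_eq_zero_iff _ hinj]
    exact ⟨fun h => ⟨1, hOre.1.1, by rw [h, mul_zero]⟩, fun ⟨s, hs, hsr⟩ => hs.2 r hsr⟩

end Localization

/-- Theorem A28Feb15: `Q_{l,cl}(R)` is semisimple Artinian iff `R` is semiprime,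
`udim(_R R) < ∞`, `'C_R = C_R` and `'C_U ≠ ∅` for all uniform left ideals `U` of `R`. -/
theorem classicalLeftQuotient_semisimple_iff_lReg_eq_reg {R : Type u} [Ring R] :
    (IsLeftOre (reg R) ∧
      ∃ (Q : Type u) (_ : Ring Q) (f : R →+* Q),
        IsLeftLoc (reg R) f ∧ IsSemisimpleRing Q) ↔
    (SemiprimeRing R ∧ FinUdim R ∧ lReg R = reg R ∧
      ∀ U : Submodule R R, UniformIdeal U → (lRegIn U).Nonempty) := by
  constructor
  · rintro ⟨hOre, Q, _, f, hf, hQ⟩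
    have : Nontrivial R := nontrivial_of_ne 0 1 fun h => hOre.1.2.2 (h ▸ hOre.1.1)
    have hsp : SemiprimeRing R := semiprimeRing_of_forall_isEssentialIn fun E hE =>
      ((hf.isSemisimpleRing_iff hOre).mp hQ E hE).imp fun _ hc => ⟨hc.1, hc.2.1⟩
    exact ⟨hsp, hf.finUdim hOre, hf.lReg_eq_reg, fun U hU => hf.lRegIn_nonempty hOre hsp hU⟩
  · rintro ⟨-, hfin, hlr, hC⟩
    have := hfin.nontrivial
    obtain ⟨n, hn⟩ := hfin.exists_udimLE
    have hOre := isLeftOre_reg hn hC hlr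
    obtain ⟨Q, _, f, hf⟩ := exists_isLeftLoc hOre
    refine ⟨hOre, Q, _, f, hf, (hf.isSemisimpleRing_iff hOre).mpr fun E hE => ?_⟩
    obtain ⟨c, hcE, hc⟩ := exists_mem_lReg_of_isEssentialIn hn hC hE
    exact ⟨c, hcE, hlr ▸ hc⟩

end Bavula
end

section
/- Let R be a ring, 'S_l(R) the largest left denominator set of R contained in 'C_R, and 'Q_l(R) := 'S_l(R)⁻¹R the left regular left quotient ring of R. Then: (1) 'Q_l(R) is a left Artinian ring if and only if 'C_R is a left denominator set of R and 'Q_{l,cl}(R) := 'C_R⁻¹R is a left Artinian ring; if one of these equivalent conditions holds then 'S_l(R) = 'C_R and 'Q_l(R) = 'Q_{l,cl}(R). (2) 'Q_l(R) is a semisimple Artinian ring if and only if 'C_R is a left denominator set of R and 'Q_{l,cl}(R) is a semisimple Artinian ring; if one of these equivalent conditions holds then 'S_l(R) = 'C_R and 'Q_l(R) = 'Q_{l,cl}(R). -/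
/-!
If `'Q_l(R) = S⁻¹R` is left Artinian, the image of a left regular element `c` of `R` is right
regular in `'Q_l(R)`, hence a unit: if `s⁻¹r` annihilates it then `r c` dies in `'Q_l(R)`, so
`t r c = 0`, and thus `t r = 0`, for some `t ∈ S`. A localization inverting all of `'C_R` makes `'C_R` a left
denominator set, so `'C_R ⊆ 'S_l(R)` by maximality, and the two quotient rings are isomorphic
because both are the Ore localization of `R` at the same set. Semisimple rings are Artinian, so
the same argument gives (2).
-/

universe u

namespace Bavula

section LeftLocalization

open OreLocalization

variable {R : Type u} [Ring R] {S : Set R}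

lemma mem_lReg_iff {c : R} : c ∈ lReg R ↔ IsRightRegular c :=
  isRightRegular_iff_left_eq_zero_of_mul.symm

lemma IsMulSet.nontrivial (hS : IsMulSet S) : Nontrivial R :=
  ⟨⟨1, 0, fun h => hS.2.2 (h ▸ hS.1)⟩⟩

lemma isMulSet_lReg [Nontrivial R] : IsMulSet (lReg R) := by
  simp only [IsMulSet, mem_lReg_iff]
  exact ⟨isRegular_one.right, fun a ha b hb => ha.mul hb, not_isRightRegular_zero⟩

def IsMulSet.toSubmonoid (hS : IsMulSet S) : Submonoid R where
  carrier := S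
  one_mem' := hS.1
  mul_mem' {a b} ha hb := hS.2.1 a ha b hb

lemma IsLeftDenom.isMulSet (hS : IsLeftDenom S) : IsMulSet S := hS.1.1

noncomputable abbrev IsLeftDenom.oreSet (hS : IsLeftDenom S) : OreSet hS.isMulSet.toSubmonoid :=
  Classical.choice <| nonempty_oreSet_iff.2
    ⟨fun r₁ r₂ s h => by
      obtain ⟨t, ht, htr⟩ := hS.2 (r₁ - r₂) s s.prop (by rw [sub_mul, h, sub_self])
      exact ⟨⟨t, ht⟩, by rwa [mul_sub, sub_eq_zero] at htr⟩,
    fun r s => by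
      obtain ⟨s', hs', r', h⟩ := hS.1.2 s s.prop r
      exact ⟨r', ⟨s', hs'⟩, h⟩⟩

variable {Q : Type u} [Ring Q] {f : R →+* Q}

theorem IsLeftLoc.nonempty_ringEquiv_oreLocalization (hS : IsLeftDenom S) (hf : IsLeftLoc S f) :
    letI := hS.oreSet
    Nonempty (OreLocalization hS.isMulSet.toSubmonoid R ≃+* Q) := by
  let _ := hS.oreSet
  let g := universalHom f (IsUnit.liftRight (f.toMonoidHom.comp hS.isMulSet.toSubmonoid.subtype)
    fun s => hf.1 s s.prop) fun _ => rfl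
  refine ⟨RingEquiv.ofBijective g ⟨(injective_iff_map_eq_zero g).2 fun x hx => ?_, fun q => ?_⟩⟩
  · induction x using OreLocalization.ind with | _ r s
    rw [show g (r /ₒ s) = _ from universalHom_apply .., Units.mul_right_eq_zero] at hx
    obtain ⟨t, ht, htr⟩ := (hf.2.2 r).1 hx
    rw [OreLocalization.expand r s t (hS.isMulSet.2.1 t ht s s.prop), smul_eq_mul, htr, zero_oreDiv]
  · obtain ⟨s, hs, r, hsr⟩ := hf.2.1 q
    refine ⟨r /ₒ ⟨s, hs⟩, ?_⟩
    rw [show g (r /ₒ ⟨s, hs⟩) = _ from universalHom_apply .., Units.inv_mul_eq_iff_eq_mul]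
    exact hsr.symm

theorem IsLeftLoc.nonempty_ringEquiv {Q' : Type u} [Ring Q'] {f' : R →+* Q'}
    (hS : IsLeftDenom S) (hf : IsLeftLoc S f) (hf' : IsLeftLoc S f') : Nonempty (Q ≃+* Q') := by
  obtain ⟨e⟩ := hf.nonempty_ringEquiv_oreLocalization hS
  obtain ⟨e'⟩ := hf'.nonempty_ringEquiv_oreLocalization hS
  exact ⟨e.symm.trans e'⟩

end LeftLocalization

section Artinian

variable {R : Type u} [Ring R] {S : Set R} {Q : Type u} [Ring Q] {f : R →+* Q}

theorem IsLeftLoc.isUnit_map_of_mem_lReg [IsArtinianRing Q] (hf : IsLeftLoc S f) {c : R}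
    (hc : c ∈ lReg R) : IsUnit (f c) := by
  rw [IsArtinianRing.isUnit_iff_isRightRegular, isRightRegular_iff_left_eq_zero_of_mul]
  intro q hq
  obtain ⟨s, hs, r, hsr⟩ := hf.2.1 q
  have hfr : f r = 0 := by
    obtain ⟨t, ht, htrc⟩ := (hf.2.2 (r * c)).1 (by rw [map_mul, ← hsr, mul_assoc, hq, mul_zero])
    exact (hf.2.2 r).2 ⟨t, ht, hc _ (by rwa [← mul_assoc] at htrc)⟩
  rwa [hfr, (hf.1 s hs).mul_right_eq_zero] at hsr

theorem IsLeftLoc.isLeftDenom_of_isUnit_map {T : Set R} (hf : IsLeftLoc S f) (hS : IsMulSet S)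
    (hT : IsMulSet T) (hST : S ⊆ T) (hunit : ∀ c ∈ T, IsUnit (f c)) : IsLeftDenom T := by
  refine ⟨⟨hT, fun c hc r => ?_⟩, fun r c hc hrc => ?_⟩
  · obtain ⟨u, hu⟩ := hunit c hc
    obtain ⟨s, hs, r', hsr⟩ := hf.2.1 (f r * ↑u⁻¹)
    have hker : f (s * r - r' * c) = 0 := by
      rw [map_sub, map_mul, map_mul, ← hsr, ← hu, mul_assoc (f s), Units.inv_mul_cancel_right,
        sub_self]
    obtain ⟨w, hw, hw0⟩ := (hf.2.2 _).1 hker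
    refine ⟨w * s, hST (hS.2.1 w hw s hs), w * r', ?_⟩
    rwa [mul_assoc, mul_assoc, ← sub_eq_zero, ← mul_sub]
  · have hfr : f r = 0 := (hunit c hc).mul_left_eq_zero.1 (by rw [← map_mul, hrc, map_zero])
    obtain ⟨t, ht, htr⟩ := (hf.2.2 r).1 hfr
    exact ⟨t, hST ht, htr⟩

theorem IsLeftLoc.isLeftDenom_lReg [IsArtinianRing Q] (hf : IsLeftLoc S f) (hS : IsMulSet S)
    (hsub : S ⊆ lReg R) : IsLeftDenom (lReg R) :=
  have := hS.nontrivial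
  hf.isLeftDenom_of_isUnit_map hS isMulSet_lReg hsub fun _ => hf.isUnit_map_of_mem_lReg

theorem leftRegularLeftQuotient_iff_of_imp_isArtinianRing {P : (Q : Type u) → [Ring Q] → Prop}
    (hP : ∀ (Q : Type u) [Ring Q], P Q → IsArtinianRing Q) (hden : IsLeftDenom S)
    (hsub : S ⊆ lReg R) (hmax : ∀ T : Set R, IsLeftDenom T → T ⊆ lReg R → T ⊆ S) :
    ((∃ (Q : Type u) (_ : Ring Q) (f : R →+* Q), IsLeftLoc S f ∧ P Q) ↔
        (IsLeftDenom (lReg R) ∧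
          ∃ (Q : Type u) (_ : Ring Q) (f : R →+* Q), IsLeftLoc (lReg R) f ∧ P Q)) ∧
      ((∃ (Q : Type u) (_ : Ring Q) (f : R →+* Q), IsLeftLoc S f ∧ P Q) →
        S = lReg R ∧
        ∀ (Q1 : Type u) (_ : Ring Q1) (f1 : R →+* Q1), IsLeftLoc S f1 →
          ∀ (Q2 : Type u) (_ : Ring Q2) (f2 : R →+* Q2), IsLeftLoc (lReg R) f2 →
            Nonempty (Q1 ≃+* Q2)) := by
  have eq_lReg (h : IsLeftDenom (lReg R)) : S = lReg R := hsub.antisymm (hmax _ h subset_rfl)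
  have eq_lReg_of_loc (h : ∃ (Q : Type u) (_ : Ring Q) (f : R →+* Q), IsLeftLoc S f ∧ P Q) :
      S = lReg R := by
    obtain ⟨Q, _, f, hf, hPQ⟩ := h
    have := hP Q hPQ
    exact eq_lReg (hf.isLeftDenom_lReg hden.isMulSet hsub)
  refine ⟨⟨fun h => ?_, fun ⟨hd, h⟩ => eq_lReg hd ▸ h⟩, fun h => ⟨eq_lReg_of_loc h, ?_⟩⟩
  · obtain rfl := eq_lReg_of_loc h
    exact ⟨hden, h⟩
  · intro Q1 _ f1 h1 Q2 _ f2 h2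
    exact h1.nonempty_ringEquiv hden (eq_lReg_of_loc h ▸ h2)

end Artinian

/-- Theorem 8Mar15: `'Q_l(R) = 'S_l(R)⁻¹R` is left Artinian (resp. semisimple Artinian)
iff `'Q_{l,cl}(R) = 'C_R⁻¹R` is; and then `'S_l(R) = 'C_R` and `'Q_l(R) = 'Q_{l,cl}(R)`.
Here `S` stands for `'S_l(R)`, the largest left denominator set contained in `'C_R`. -/
theorem leftRegularLeftQuotient_artinian_semisimple_iff {R : Type u} [Ring R]
    (S : Set R) (hden : IsLeftDenom S) (hsub : S ⊆ lReg R)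
    (hmax : ∀ T : Set R, IsLeftDenom T → T ⊆ lReg R → T ⊆ S) :
    -- (1) left Artinian case
    (((∃ (Q : Type u) (_ : Ring Q) (f : R →+* Q),
          IsLeftLoc S f ∧ IsArtinianRing Q) ↔
        (IsLeftDenom (lReg R) ∧
          ∃ (Q : Type u) (_ : Ring Q) (f : R →+* Q),
            IsLeftLoc (lReg R) f ∧ IsArtinianRing Q)) ∧
      ((∃ (Q : Type u) (_ : Ring Q) (f : R →+* Q),
          IsLeftLoc S f ∧ IsArtinianRing Q) →
        S = lReg R ∧
        ∀ (Q1 : Type u) (_ : Ring Q1) (f1 : R →+* Q1), IsLeftLoc S f1 →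
          ∀ (Q2 : Type u) (_ : Ring Q2) (f2 : R →+* Q2), IsLeftLoc (lReg R) f2 →
            Nonempty (Q1 ≃+* Q2))) ∧
    -- (2) semisimple Artinian case
    (((∃ (Q : Type u) (_ : Ring Q) (f : R →+* Q),
          IsLeftLoc S f ∧ IsSemisimpleRing Q) ↔
        (IsLeftDenom (lReg R) ∧
          ∃ (Q : Type u) (_ : Ring Q) (f : R →+* Q),
            IsLeftLoc (lReg R) f ∧ IsSemisimpleRing Q)) ∧
      ((∃ (Q : Type u) (_ : Ring Q) (f : R →+* Q),
          IsLeftLoc S f ∧ IsSemisimpleRing Q) →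
        S = lReg R ∧
        ∀ (Q1 : Type u) (_ : Ring Q1) (f1 : R →+* Q1), IsLeftLoc S f1 →
          ∀ (Q2 : Type u) (_ : Ring Q2) (f2 : R →+* Q2), IsLeftLoc (lReg R) f2 →
            Nonempty (Q1 ≃+* Q2))) :=
  ⟨leftRegularLeftQuotient_iff_of_imp_isArtinianRing (fun _ _ h => h) hden hsub hmax,
    leftRegularLeftQuotient_iff_of_imp_isArtinianRing (fun _ _ _ => inferInstance) hden hsub hmax⟩

end Bavula
end

section
/- Let R be a ring. Then: (1) among the left denominator sets of R contained in the set 'C_R of left regular elements there exists a largest one with respect to inclusion (denoted 'S_l(R)), namely the union of all left denominator sets of R contained in 'C_R is itself a left denominator set; moreover, the largest right Ore set S_r(R) of R consisting of regular elements is the largest right denominator set of R contained in 'C_R; (2) dually, among the right denominator sets of R contained in the set C_R' of right regular elements there exists a largest one, and the largest left Ore set S_l(R) of R consisting of regular elements is the largest left denominator set of R contained in C_R'. -/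
universe u

namespace Bavula

/-!
A set of left regular elements satisfies the left denominator condition for free (`r s = 0`
forces `r = 0`), so only multiplicativity of the union `U` of all left denominator sets inside
`'C_R` is at stake. The left Ore condition passes from `U` to the submonoid it generates, which
thus is itself a left denominator set inside `'C_R`, hence contained in `U`.

If `D ⊆ 'C_R` is a right denominator set and `d y = 0` with `d ∈ D`, then `y t = 0` for some
`t ∈ D`, and `t` being left regular forces `y = 0`. So `D` consists of regular elements and is
contained in `S_r(R)`, which in turn is a right denominator set because it lies in `C_R'`.
-/

section

variable {R : Type u} [Ring R]

theorem isMulSet_of_zero_notMem (M : Submonoid R) (h0 : (0 : R) ∉ M) : IsMulSet (M : Set R) :=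
  ⟨M.one_mem, fun _ ha _ hb => M.mul_mem ha hb, h0⟩

def LeftOreCondition (S : Set R) : Prop :=
  ∀ s ∈ S, ∀ r : R, ∃ s' ∈ S, ∃ r' : R, s' * r = r' * s

def RightOreCondition (S : Set R) : Prop :=
  ∀ s ∈ S, ∀ r : R, ∃ s' ∈ S, ∃ r' : R, r * s' = s * r'

theorem LeftOreCondition.sUnion {F : Set (Set R)} (hF : ∀ S ∈ F, LeftOreCondition S) :
    LeftOreCondition (⋃₀ F) := by
  rintro s ⟨S, hS, hs⟩ r
  obtain ⟨s', hs', r', h⟩ := hF S hS s hs r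
  exact ⟨s', ⟨S, hS, hs'⟩, r', h⟩

theorem RightOreCondition.sUnion {F : Set (Set R)} (hF : ∀ S ∈ F, RightOreCondition S) :
    RightOreCondition (⋃₀ F) := by
  rintro s ⟨S, hS, hs⟩ r
  obtain ⟨s', hs', r', h⟩ := hF S hS s hs r
  exact ⟨s', ⟨S, hS, hs'⟩, r', h⟩

theorem LeftOreCondition.closure {G : Set R} (hG : LeftOreCondition G) :
    LeftOreCondition (Submonoid.closure G : Set R) := by
  intro s hs
  induction hs using Submonoid.closure_induction with
  | mem g hg =>
    intro r
    obtain ⟨s', hs', r', h⟩ := hG g hg r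
    exact ⟨s', Submonoid.subset_closure hs', r', h⟩
  | one => exact fun r => ⟨1, Submonoid.one_mem _, r, by rw [one_mul, mul_one]⟩
  | mul a b _ _ iha ihb =>
    intro r
    obtain ⟨s₁, hs₁, r₁, h₁⟩ := ihb r
    obtain ⟨s₂, hs₂, r₂, h₂⟩ := iha r₁
    exact ⟨s₂ * s₁, Submonoid.mul_mem _ hs₂ hs₁, r₂, by
      rw [mul_assoc, h₁, ← mul_assoc, h₂, mul_assoc]⟩

theorem RightOreCondition.closure {G : Set R} (hG : RightOreCondition G) :
    RightOreCondition (Submonoid.closure G : Set R) := by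
  intro s hs
  induction hs using Submonoid.closure_induction with
  | mem g hg =>
    intro r
    obtain ⟨s', hs', r', h⟩ := hG g hg r
    exact ⟨s', Submonoid.subset_closure hs', r', h⟩
  | one => exact fun r => ⟨1, Submonoid.one_mem _, r, by rw [one_mul, mul_one]⟩
  | mul a b _ _ iha ihb =>
    intro r
    obtain ⟨s₁, hs₁, r₁, h₁⟩ := iha r
    obtain ⟨s₂, hs₂, r₂, h₂⟩ := ihb r₁
    exact ⟨s₁ * s₂, Submonoid.mul_mem _ hs₁ hs₂, r₂, by
      rw [← mul_assoc, h₁, mul_assoc, h₂, ← mul_assoc]⟩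

theorem isLeftDenom_of_subset_lReg {S : Set R} (hS : IsLeftOre S) (hSl : S ⊆ lReg R) :
    IsLeftDenom S :=
  ⟨hS, fun r s hs hrs => ⟨s, hs, by rw [hSl hs r hrs, mul_zero]⟩⟩

theorem isRightDenom_of_subset_rReg {S : Set R} (hS : IsRightOre S) (hSr : S ⊆ rReg R) :
    IsRightDenom S :=
  ⟨hS, fun r s hs hsr => ⟨s, hs, by rw [hSr hs r hsr, zero_mul]⟩⟩

theorem isLeftDenom_closure_of_subset_lReg [Nontrivial R] {G : Set R}
    (hG : LeftOreCondition G) (hGl : G ⊆ lReg R) :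
    IsLeftDenom (Submonoid.closure G : Set R) ∧ (Submonoid.closure G : Set R) ⊆ lReg R := by
  -- Mathlib names a zero divisor by the side of the other factor: `'C_R = nonZeroDivisorsRight R`.
  have hcl : (Submonoid.closure G : Set R) ⊆ lReg R :=
    show Submonoid.closure G ≤ nonZeroDivisorsRight R from Submonoid.closure_le.mpr hGl
  have h0 : (0 : R) ∉ Submonoid.closure G := fun h => zero_notMem_nonZeroDivisorsRight (hcl h)
  exact ⟨isLeftDenom_of_subset_lReg ⟨isMulSet_of_zero_notMem _ h0, hG.closure⟩ hcl, hcl⟩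

theorem isRightDenom_closure_of_subset_rReg [Nontrivial R] {G : Set R}
    (hG : RightOreCondition G) (hGr : G ⊆ rReg R) :
    IsRightDenom (Submonoid.closure G : Set R) ∧ (Submonoid.closure G : Set R) ⊆ rReg R := by
  have hcl : (Submonoid.closure G : Set R) ⊆ rReg R :=
    show Submonoid.closure G ≤ nonZeroDivisorsLeft R from Submonoid.closure_le.mpr hGr
  have h0 : (0 : R) ∉ Submonoid.closure G := fun h => zero_notMem_nonZeroDivisorsLeft (hcl h)
  exact ⟨isRightDenom_of_subset_rReg ⟨isMulSet_of_zero_notMem _ h0, hG.closure⟩ hcl, hcl⟩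

theorem isGreatest_sUnion_leftDenom_lReg [Nontrivial R] :
    IsGreatest {S : Set R | IsLeftDenom S ∧ S ⊆ lReg R}
      (⋃₀ {S : Set R | IsLeftDenom S ∧ S ⊆ lReg R}) := by
  set U := ⋃₀ {S : Set R | IsLeftDenom S ∧ S ⊆ lReg R}
  have hOre : LeftOreCondition U := LeftOreCondition.sUnion fun S hS => hS.1.1.2
  have hcl := isLeftDenom_closure_of_subset_lReg hOre (Set.sUnion_subset fun S hS => hS.2)
  have hU : (Submonoid.closure U : Set R) = U :=
    (Set.subset_sUnion_of_mem hcl).antisymm Submonoid.subset_closure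
  exact ⟨hU ▸ hcl, fun _ => Set.subset_sUnion_of_mem⟩

theorem isGreatest_sUnion_rightDenom_rReg [Nontrivial R] :
    IsGreatest {S : Set R | IsRightDenom S ∧ S ⊆ rReg R}
      (⋃₀ {S : Set R | IsRightDenom S ∧ S ⊆ rReg R}) := by
  set U := ⋃₀ {S : Set R | IsRightDenom S ∧ S ⊆ rReg R}
  have hOre : RightOreCondition U := RightOreCondition.sUnion fun S hS => hS.1.1.2
  have hcl := isRightDenom_closure_of_subset_rReg hOre (Set.sUnion_subset fun S hS => hS.2)
  have hU : (Submonoid.closure U : Set R) = U :=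
    (Set.subset_sUnion_of_mem hcl).antisymm Submonoid.subset_closure
  exact ⟨hU ▸ hcl, fun _ => Set.subset_sUnion_of_mem⟩

theorem IsRightDenom.subset_reg_of_subset_lReg {D : Set R} (hD : IsRightDenom D)
    (hDl : D ⊆ lReg R) : D ⊆ reg R := by
  refine fun d hd => ⟨hDl hd, fun y hdy => ?_⟩
  obtain ⟨t, ht, hyt⟩ := hD.2 y d hd hdy
  exact hDl ht y hyt

theorem IsLeftDenom.subset_reg_of_subset_rReg {D : Set R} (hD : IsLeftDenom D)
    (hDr : D ⊆ rReg R) : D ⊆ reg R := by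
  refine fun d hd => ⟨fun y hyd => ?_, hDr hd⟩
  obtain ⟨t, ht, hty⟩ := hD.2 y d hd hyd
  exact hDr ht y hty

theorem isGreatest_rightDenom_lReg_of_isGreatest_rightOre_reg {Sr : Set R}
    (h : IsGreatest {T : Set R | IsRightOre T ∧ T ⊆ reg R} Sr) :
    IsGreatest {D : Set R | IsRightDenom D ∧ D ⊆ lReg R} Sr := by
  obtain ⟨⟨hOre, hreg⟩, hmax⟩ := h
  exact ⟨⟨isRightDenom_of_subset_rReg hOre fun _ hx => (hreg hx).2, fun _ hx => (hreg hx).1⟩,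
    fun D hD => hmax ⟨hD.1.1, hD.1.subset_reg_of_subset_lReg hD.2⟩⟩

theorem isGreatest_leftDenom_rReg_of_isGreatest_leftOre_reg {Sl : Set R}
    (h : IsGreatest {T : Set R | IsLeftOre T ∧ T ⊆ reg R} Sl) :
    IsGreatest {D : Set R | IsLeftDenom D ∧ D ⊆ rReg R} Sl := by
  obtain ⟨⟨hOre, hreg⟩, hmax⟩ := h
  exact ⟨⟨isLeftDenom_of_subset_lReg hOre fun _ hx => (hreg hx).1, fun _ hx => (hreg hx).2⟩,
    fun D hD => hmax ⟨hD.1.1, hD.1.subset_reg_of_subset_rReg hD.2⟩⟩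

end

/-- Lemma a8Mar15: (1) among the left denominator sets contained in `'C_R` there is a
largest one, namely the union of them all; and the largest right Ore set `S_r(R)`
consisting of regular elements is the largest right denominator set contained in `'C_R`.
(2) The dual statement. -/
theorem largestLeftDenominator_in_leftRegular_exists {R : Type u} [Ring R] [Nontrivial R] :
    -- (1)
    (IsLeftDenom (⋃₀ {S : Set R | IsLeftDenom S ∧ S ⊆ lReg R}) ∧
     (⋃₀ {S : Set R | IsLeftDenom S ∧ S ⊆ lReg R}) ⊆ lReg R ∧
     (∀ T : Set R, IsLeftDenom T → T ⊆ lReg R →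
        T ⊆ ⋃₀ {S : Set R | IsLeftDenom S ∧ S ⊆ lReg R}) ∧
     (∀ Sr : Set R, IsRightOre Sr → Sr ⊆ reg R →
        (∀ T : Set R, IsRightOre T → T ⊆ reg R → T ⊆ Sr) →
        IsRightDenom Sr ∧ Sr ⊆ lReg R ∧
          ∀ D : Set R, IsRightDenom D → D ⊆ lReg R → D ⊆ Sr)) ∧
    -- (2)
    (IsRightDenom (⋃₀ {S : Set R | IsRightDenom S ∧ S ⊆ rReg R}) ∧
     (⋃₀ {S : Set R | IsRightDenom S ∧ S ⊆ rReg R}) ⊆ rReg R ∧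
     (∀ T : Set R, IsRightDenom T → T ⊆ rReg R →
        T ⊆ ⋃₀ {S : Set R | IsRightDenom S ∧ S ⊆ rReg R}) ∧
     (∀ Sl : Set R, IsLeftOre Sl → Sl ⊆ reg R →
        (∀ T : Set R, IsLeftOre T → T ⊆ reg R → T ⊆ Sl) →
        IsLeftDenom Sl ∧ Sl ⊆ rReg R ∧
          ∀ D : Set R, IsLeftDenom D → D ⊆ rReg R → D ⊆ Sl)) := by
  obtain ⟨⟨hL, hLl⟩, hLmax⟩ := isGreatest_sUnion_leftDenom_lReg (R := R)
  obtain ⟨⟨hR, hRr⟩, hRmax⟩ := isGreatest_sUnion_rightDenom_rReg (R := R)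
  refine ⟨⟨hL, hLl, fun T hT hTl => hLmax ⟨hT, hTl⟩, fun Sr hSr hreg hmax => ?_⟩,
    ⟨hR, hRr, fun T hT hTr => hRmax ⟨hT, hTr⟩, fun Sl hSl hreg hmax => ?_⟩⟩
  · obtain ⟨⟨hD, hDl⟩, hDmax⟩ := isGreatest_rightDenom_lReg_of_isGreatest_rightOre_reg
      ⟨⟨hSr, hreg⟩, fun T hT => hmax T hT.1 hT.2⟩
    exact ⟨hD, hDl, fun D hD hDl => hDmax ⟨hD, hDl⟩⟩
  · obtain ⟨⟨hD, hDr⟩, hDmax⟩ := isGreatest_leftDenom_rReg_of_isGreatest_leftOre_reg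
      ⟨⟨hSl, hreg⟩, fun T hT => hmax T hT.1 hT.2⟩
    exact ⟨hD, hDr, fun D hD hDr => hDmax ⟨hD, hDr⟩⟩

end Bavula
end

section
/- Suppose that R is a ring, U is a uniform left ideal of R, u ∈ 'C_U, and K = ker(·u_R) := {x ∈ R | xu = 0}. Then: (1) U ∩ K = 0 and U ⊕ K is an essential left ideal of R; (2) if I is a left ideal of R such that U ⊆ I, then U ⊕ (K ∩ I) is an essential left R-submodule of I. -/
/-!
Right multiplication by `u` is an `R`-linear map `f : R → R` with image in `U`, injective on `U`
and with kernel `K`. If `J` is a nonzero left ideal with `f J ≠ 0`, then `f J` and `f U ∋ u²` are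
nonzero submodules of the uniform ideal `U`, so they meet: `x u = v u ≠ 0` with `x ∈ J`, `v ∈ U`,
and then `x = v + (x - v) ∈ U ⊕ K`. Part (2) follows from part (1) by the modular law.
-/

universe u

namespace Bavula

open Submodule

section

variable {R : Type u} [Ring R]

theorem map_inf_map_eq_map_inf_sup_ker {M N : Type*} [AddCommGroup M] [Module R M]
    [AddCommGroup N] [Module R N] (f : M →ₗ[R] N) (p q : Submodule R M) :
    p.map f ⊓ q.map f = (p ⊓ (q ⊔ LinearMap.ker f)).map f := by
  rw [map_inf_eq_map_inf_comap, comap_map_eq]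

theorem UniformIdeal.essIdeal_sup_ker {U : Submodule R R} (hU : UniformIdeal U)
    {f : R →ₗ[R] R} (hfU : LinearMap.range f ≤ U) (hf : U.map f ≠ ⊥) :
    EssIdeal (U ⊔ LinearMap.ker f) := by
  intro J hJ
  by_cases hJf : J.map f = ⊥
  · rwa [inf_eq_right.mpr (le_sup_of_le_right (LinearMap.le_ker_iff_map.mpr hJf))]
  · have hmeet :=
      hU.2 _ _ (LinearMap.map_le_range.trans hfU) (LinearMap.map_le_range.trans hfU) hJf hf
    rw [map_inf_map_eq_map_inf_sup_ker, inf_comm] at hmeet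
    exact fun h => hmeet (by rw [h, Submodule.map_bot])

theorem EssIdeal.essIn_sup_inf {U K I : Submodule R R} (h : EssIdeal (U ⊔ K)) (hUI : U ≤ I) :
    EssIn (U ⊔ K ⊓ I) I := by
  refine ⟨sup_le hUI inf_le_right, fun W hWI hW => ?_⟩
  rw [← sup_inf_assoc_of_le K hUI, inf_assoc, inf_eq_right.mpr hWI]
  exact h W hW

theorem inf_ker_toSpanSingleton_eq_bot {U : Submodule R R} {u : R} (hu : u ∈ lRegIn U) :
    U ⊓ LinearMap.ker (LinearMap.toSpanSingleton R R u) = ⊥ :=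
  eq_bot_iff.mpr fun x ⟨hxU, hxu⟩ => hu.2 x hxU hxu

theorem map_toSpanSingleton_ne_bot {U : Submodule R R} (hU : U ≠ ⊥) {u : R}
    (hu : u ∈ lRegIn U) : U.map (LinearMap.toSpanSingleton R R u) ≠ ⊥ := by
  have hu0 : u ≠ 0 := by
    rintro rfl
    exact hU (eq_bot_iff.mpr fun x hx => hu.2 x hx (mul_zero x))
  exact (Submodule.ne_bot_iff _).mpr ⟨u * u, mem_map_of_mem hu.1, fun h => hu0 (hu.2 u hu.1 h)⟩

theorem range_toSpanSingleton_le {U : Submodule R R} {u : R} (hu : u ∈ U) :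
    LinearMap.range (LinearMap.toSpanSingleton R R u) ≤ U := by
  rwa [LinearMap.range_toSpanSingleton, span_singleton_le_iff_mem]

end

/-- Lemma a27Feb15: if `U` is a uniform left ideal, `u ∈ 'C_U` and
`K = ker(·u_R) = {x ∈ R | x u = 0}`, then `U ⊕ K` is an essential left ideal of `R`,
and for any left ideal `I ⊇ U`, `U ⊕ (K ∩ I)` is an essential submodule of `I`. -/
theorem uniform_leftRegular_essential {R : Type u} [Ring R]
    (U : Submodule R R) (hU : UniformIdeal U)
    (u : R) (hu : u ∈ lRegIn U)
    (K : Submodule R R) (hK : ∀ x : R, x ∈ K ↔ x * u = 0) :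
    -- (1)
    (U ⊓ K = ⊥ ∧ EssIdeal (U ⊔ K)) ∧
    -- (2)
    (∀ I : Submodule R R, U ≤ I →
      U ⊓ (K ⊓ I) = ⊥ ∧ EssIn (U ⊔ K ⊓ I) I) := by
  obtain rfl : K = LinearMap.ker (LinearMap.toSpanSingleton R R u) := Submodule.ext hK
  have hUK := inf_ker_toSpanSingleton_eq_bot hu
  have hess := hU.essIdeal_sup_ker (range_toSpanSingleton_le hu.1)
    (map_toSpanSingleton_ne_bot hU.1 hu)
  exact ⟨⟨hUK, hess⟩, fun I hUI =>
    ⟨eq_bot_mono (inf_le_inf_left U inf_le_left) hUK, hess.essIn_sup_inf hUI⟩⟩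

end Bavula
end
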